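/- arXiv:1001.4964 — 4 statements merged into one kernel-verified Lean document; each statement's English description precedes it below -/
import Mathlib

section
/- In the Weyl algebra generated by a and a† subject to a·a† = a†·a + 1, for all natural numbers p, q, k, l the product of normally ordered monomials satisfies: (a†)^p a^q · (a†)^k a^l = Σ_{i=0}^{min(q,k)} C(q,i)·C(k,i)·i! · (a†)^{p+k-i} a^{q+l-i}. -/
/-! With `D = [a, ·]`, left multiplication by `a` is right multiplication by `a` plus `D`, and
these two commute, so the binomial theorem gives `a^q y = Σ C(q,i) D^i(y) a^(q-i)`.
When `[a, a†] = 1`, `D` differentiates powers of `a†`: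
`D^i((a†)^k) = k(k-1)⋯(k-i+1) (a†)^(k-i) = C(k,i) i! (a†)^(k-i)`, which vanishes for `i > k`. -/

open Finset

section Ring

variable {R : Type*} [Ring R]

def commutatorHom (a : R) : R →+ R := AddMonoidHom.mulLeft a - AddMonoidHom.mulRight a

@[simp]
theorem commutatorHom_apply (a z : R) : commutatorHom a z = a * z - z * a := rfl

theorem pow_mul_eq_sum_choose_nsmul (a y : R) (n : ℕ) :
    a ^ n * y =
      ∑ i ∈ range (n + 1), n.choose i • ((commutatorHom a)^[i] y * a ^ (n - i)) := by
  induction n with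
  | zero => simp
  | succ n ih =>
    have hstep : ∀ i ∈ range (n + 1), a * ((commutatorHom a)^[i] y * a ^ (n - i)) =
        (commutatorHom a)^[i] y * a ^ (n + 1 - i) +
          (commutatorHom a)^[i + 1] y * a ^ (n - i) := by
      intro i hi
      have hin : n - i + 1 = n + 1 - i := by have := mem_range.mp hi; omega
      rw [Function.iterate_succ_apply', commutatorHom_apply, ← hin, pow_succ']
      noncomm_ring
    rw [sum_choose_succ_nsmul (fun i j ↦ (commutatorHom a)^[i] y * a ^ j), ← sum_add_distrib,
      pow_succ', mul_assoc, ih, mul_sum]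
    exact sum_congr rfl fun i hi ↦ by rw [mul_smul_comm, hstep i hi, smul_add]

variable {a b : R}

theorem commutatorHom_pow_of_commutatorHom_eq_one (h : commutatorHom a b = 1) (m : ℕ) :
    commutatorHom a (b ^ m) = m • b ^ (m - 1) := by
  induction m with
  | zero => simp
  | succ m ih =>
    have hsucc : m • b ^ (m - 1) * b = m • b ^ m := by
      cases m with
      | zero => simp
      | succ m => rw [smul_mul_assoc, Nat.add_sub_cancel, ← pow_succ]
    calc commutatorHom a (b ^ (m + 1))
          = commutatorHom a (b ^ m) * b + b ^ m * commutatorHom a b := by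
          simp only [commutatorHom_apply, pow_succ]; noncomm_ring
      _ = (m + 1) • b ^ m := by rw [ih, h, hsucc, mul_one, succ_nsmul]

theorem iterate_commutatorHom_pow_of_commutatorHom_eq_one (h : commutatorHom a b = 1)
    (i m : ℕ) :
    (commutatorHom a)^[i] (b ^ m) = m.descFactorial i • b ^ (m - i) := by
  induction i with
  | zero => simp
  | succ i ih =>
    rw [Function.iterate_succ_apply', ih, map_nsmul, commutatorHom_pow_of_commutatorHom_eq_one h,
      smul_smul, Nat.descFactorial_succ, mul_comm, Nat.sub_sub]

theorem pow_mul_pow_of_commutatorHom_eq_one (h : commutatorHom a b = 1) (q k : ℕ) :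
    a ^ q * b ^ k = ∑ i ∈ range (min q k + 1),
      (q.choose i * k.descFactorial i) • (b ^ (k - i) * a ^ (q - i)) := by
  have hvanish : ∀ i ∈ range (q + 1), i ∉ range (min q k + 1) →
      (q.choose i * k.descFactorial i) • (b ^ (k - i) * a ^ (q - i)) = 0 := by
    intro i hiq hik
    simp only [mem_range] at hiq hik
    rw [Nat.descFactorial_eq_zero_iff_lt.mpr (by omega), mul_zero, zero_smul]
  calc a ^ q * b ^ k = ∑ i ∈ range (q + 1),
        (q.choose i * k.descFactorial i) • (b ^ (k - i) * a ^ (q - i)) := by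
        rw [pow_mul_eq_sum_choose_nsmul]
        refine sum_congr rfl fun i _ ↦ ?_
        rw [iterate_commutatorHom_pow_of_commutatorHom_eq_one h, smul_mul_assoc, smul_smul]
    _ = _ := (sum_subset (range_subset_range.mpr (by omega)) hvanish).symm

end Ring

/-- in the Heisenberg-Weyl algebra (any ring with elements `a`, `ad`
satisfying `a·a† = a†·a + 1`), the product of normally ordered monomials is
`(a†)^p a^q · (a†)^k a^l = Σ_{i=0}^{min(q,k)} C(q,i)·C(k,i)·i! · (a†)^{p+k-i} a^{q+l-i}`. -/
theorem weyl_product_formula {R : Type} [Ring R] (a ad : R)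
    (h : a * ad = ad * a + 1) (p q k l : ℕ) :
    (ad ^ p * a ^ q) * (ad ^ k * a ^ l)
      = ∑ i ∈ Finset.range (min q k + 1),
          (q.choose i * k.choose i * Nat.factorial i) •
            (ad ^ (p + k - i) * a ^ (q + l - i)) := by
  have hcomm : commutatorHom a ad = 1 := by rw [commutatorHom_apply, h, add_sub_cancel_left]
  calc (ad ^ p * a ^ q) * (ad ^ k * a ^ l) = ad ^ p * (a ^ q * ad ^ k) * a ^ l := by
        simp only [mul_assoc]
    _ = _ := by
      rw [pow_mul_pow_of_commutatorHom_eq_one hcomm, mul_sum, sum_mul]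
      refine sum_congr rfl fun i hi ↦ ?_
      have hi : i ≤ q ∧ i ≤ k := by simp only [mem_range] at hi; omega
      rw [mul_smul_comm, smul_mul_assoc, ← mul_assoc, mul_assoc _ _ (a ^ l), ← pow_add,
        ← pow_add, ← Nat.add_sub_assoc hi.2, ← Nat.sub_add_comm hi.1,
        Nat.descFactorial_eq_factorial_mul_choose, mul_left_comm, mul_comm]
end

section
/- In the enveloping algebra of the Heisenberg Lie algebra, with relations a·a† = a†·a + e, e·a† = a†·e, e·a = a·e, for all natural numbers p, q, r, k, l, m: (a†)^p a^q e^r · (a†)^k a^l e^m = Σ_{i=0}^{min(q,k)} C(q,i)·C(k,i)·i! · (a†)^{p+k-i} a^{q+l-i} e^{r+m+i}. -/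
open Finset Nat

section Aux
variable {R : Type} [Ring R]

private lemma swap3 {x y z : R} (h : x * y = y * x) : x * (y * z) = y * (x * z) := by
  rw [← mul_assoc, h, mul_assoc]

private lemma coeff_id (q k j : ℕ) :
    q.choose (j+1) * (k+1).choose (j+1) * (j+1)! =
      q.choose (j+1) * k.choose (j+1) * (j+1)! + q.choose j * k.choose j * j ! * (q - j) := by
  rw [Nat.choose_succ_succ]
  have h1 : q.choose (j+1) * (k.choose j + k.choose (j+1)) * (j+1)! =
      q.choose (j+1) * k.choose (j+1) * (j+1)! + q.choose (j+1) * k.choose j * (j+1)! := by ring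
  rw [h1]
  congr 1
  calc q.choose (j+1) * k.choose j * (j+1)!
      = (q.choose (j+1) * (j+1)) * (k.choose j * j !) := by rw [Nat.factorial_succ]; ring
    _ = (q.choose j * (q - j)) * (k.choose j * j !) := by rw [Nat.choose_succ_right_eq]
    _ = q.choose j * k.choose j * j ! * (q - j) := by ring

private lemma pow_a_mul_ad (a ad e : R) (h1 : a * ad = ad * a + e) (h3 : e * a = a * e) :
    ∀ n : ℕ, a ^ n * ad = ad * a ^ n + n • (a ^ (n-1) * e) := by
  intro n
  induction n with
  | zero => simp
  | succ n ih =>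
    match n, ih with
    | 0, _ => simpa using h1
    | m+1, ih =>
      have e1 : a ^ (m+2) * ad = a ^ (m+1) * (a * ad) := by
        rw [pow_succ, mul_assoc]
      rw [e1, h1, mul_add, ← mul_assoc, ih, add_mul, smul_mul_assoc, mul_assoc, mul_assoc,
        h3, ← mul_assoc, ← mul_assoc]
      have e2 : a ^ (m+1-1) * a = a ^ (m+1) := by
        rw [Nat.add_sub_cancel, ← pow_succ]
      simp only [Nat.add_sub_cancel]
      rw [mul_assoc ad, ← pow_succ, ← pow_succ]
      conv_rhs => rw [succ_nsmul]
      abel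

private lemma key (a ad e : R) (h1 : a * ad = ad * a + e) (h2 : e * ad = ad * e)
    (h3 : e * a = a * e) (q k : ℕ) :
    a ^ q * ad ^ k = ∑ i ∈ Finset.range (k+1),
      (q.choose i * k.choose i * i !) • (ad ^ (k-i) * a ^ (q-i) * e ^ i) := by
  induction k with
  | zero => simp
  | succ k ih =>
    have head : Commute e ad := h2
    rw [pow_succ, ← mul_assoc, ih, Finset.sum_mul]
    have step : ∀ i ∈ Finset.range (k+1),
        ((q.choose i * k.choose i * i !) • (ad ^ (k-i) * a ^ (q-i) * e ^ i)) * ad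
        = (q.choose i * k.choose i * i !) • (ad ^ (k+1-i) * a ^ (q-i) * e ^ i)
          + ((q.choose i * k.choose i * i !) * (q-i)) •
              (ad ^ (k+1-(i+1)) * a ^ (q-(i+1)) * e ^ (i+1)) := by
      intro i hi
      rw [Finset.mem_range] at hi
      have hik : i ≤ k := Nat.lt_succ_iff.mp hi
      have c1 : ad ^ (k-i) * a ^ (q-i) * e ^ i * ad
          = ad ^ (k-i) * (a ^ (q-i) * ad) * e ^ i := by
        rw [mul_assoc (ad ^ (k-i) * a ^ (q-i)), (head.pow_left i).eq, ← mul_assoc,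
          mul_assoc (ad ^ (k-i))]
      rw [smul_mul_assoc, c1, pow_a_mul_ad a ad e h1 h3 (q-i)]
      have ek : k - i + 1 = k + 1 - i := by omega
      have eq1 : k + 1 - (i+1) = k - i := by omega
      have eq2 : q - i - 1 = q - (i+1) := by omega
      have c2 : ad ^ (k-i) * (ad * a ^ (q-i) + (q-i) • (a ^ (q-i-1) * e)) * e ^ i
          = ad ^ (k+1-i) * a ^ (q-i) * e ^ i
            + (q-i) • (ad ^ (k+1-(i+1)) * a ^ (q-(i+1)) * e ^ (i+1)) := by
        rw [mul_add, add_mul, mul_smul_comm, smul_mul_assoc]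
        congr 1
        · rw [← mul_assoc, ← pow_succ, ek]
        · congr 1
          rw [eq1, eq2, mul_assoc, mul_assoc, ← _root_.pow_succ', ← mul_assoc]
      rw [c2, smul_add, smul_smul]
    rw [Finset.sum_congr rfl step, Finset.sum_add_distrib]
    have dcoeff : ∀ i : ℕ, q.choose i * (k+1).choose i * i !
        = q.choose i * k.choose i * i !
          + (match i with | 0 => 0 | j+1 => q.choose j * k.choose j * j ! * (q - j)) := by
      intro i
      match i with
      | 0 => simp
      | j+1 => exact coeff_id q k j
    have expand : ∀ i ∈ Finset.range (k+1+1),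
        (q.choose i * (k+1).choose i * i !) • (ad ^ (k+1-i) * a ^ (q-i) * e ^ i)
        = (q.choose i * k.choose i * i !) • (ad ^ (k+1-i) * a ^ (q-i) * e ^ i)
          + ((match i with | 0 => 0 | j+1 => q.choose j * k.choose j * j ! * (q - j)) : ℕ) •
              (ad ^ (k+1-i) * a ^ (q-i) * e ^ i) := by
      intro i _
      rw [dcoeff i, add_smul]
    conv_rhs => rw [Finset.sum_congr rfl expand]
    rw [Finset.sum_add_distrib]
    congr 1
    · conv_rhs => rw [Finset.sum_range_succ]
      simp [Nat.choose_succ_self]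
    · conv_rhs => rw [Finset.sum_range_succ']
      simp

end Aux

/-- in the enveloping algebra of the Heisenberg Lie algebra (any ring with
elements `a`, `ad`, `e` satisfying `a·a† = a†·a + e`, `e` commuting with `a†` and `a`),
`(a†)^p a^q e^r · (a†)^k a^l e^m
  = Σ_{i=0}^{min(q,k)} C(q,i)·C(k,i)·i! · (a†)^{p+k-i} a^{q+l-i} e^{r+m+i}`. -/
theorem enveloping_product_formula {R : Type} [Ring R] (a ad e : R)
    (h1 : a * ad = ad * a + e) (h2 : e * ad = ad * e) (h3 : e * a = a * e)
    (p q r k l m : ℕ) :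
    (ad ^ p * a ^ q * e ^ r) * (ad ^ k * a ^ l * e ^ m)
      = ∑ i ∈ Finset.range (min q k + 1),
          (q.choose i * k.choose i * Nat.factorial i) •
            (ad ^ (p + k - i) * a ^ (q + l - i) * e ^ (r + m + i)) := by
  have hea : Commute e a := h3
  have head : Commute e ad := h2
  have key' : a ^ q * ad ^ k = ∑ i ∈ Finset.range (min q k + 1),
      (q.choose i * k.choose i * i !) • (ad ^ (k-i) * a ^ (q-i) * e ^ i) := by
    rw [key a ad e h1 h2 h3 q k]
    symm
    apply Finset.sum_subset
    · exact Finset.range_subset_range.mpr (by omega)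
    · intro i hi hni
      rw [Finset.mem_range] at hi hni
      have : q < i := by omega
      rw [Nat.choose_eq_zero_of_lt this]
      simp
  simp only [mul_assoc]
  rw [swap3 ((head.pow_pow r k).eq), swap3 ((hea.pow_pow r l).eq), ← pow_add,
    ← mul_assoc (a ^ q) (ad ^ k), key', Finset.sum_mul, Finset.mul_sum]
  refine Finset.sum_congr rfl ?_
  intro i hi
  rw [Finset.mem_range] at hi
  have hiq : i ≤ q := by omega
  have hik : i ≤ k := by omega
  rw [smul_mul_assoc, mul_smul_comm]
  simp only [mul_assoc]
  rw [swap3 ((hea.pow_pow i l).eq), ← pow_add, ← mul_assoc (ad ^ p), ← pow_add,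
    ← mul_assoc (a ^ (q - i)), ← pow_add]
  have e1 : p + (k - i) = p + k - i := by omega
  have e2 : q - i + l = q + l - i := by omega
  have e3 : i + (r + m) = r + m + i := by omega
  rw [e1, e2, e3]
end

section
/- The linear map φ : G → U(L_H) defined on the basis of Heisenberg-Weyl diagrams by φ(Γ) = (a†)^{|Γ⁺|} a^{|Γ⁻|} e^{|Γ⁰|} is multiplicative: φ(Γ₂ * Γ₁) = φ(Γ₂)·φ(Γ₁), where Γ₂ * Γ₁ = Σ_m Γ₂ ◁_m Γ₁ is the sum over all matchings m of incoming lines of Γ₂ with outgoing lines of Γ₁. -/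
/-- Relations of the enveloping algebra `U(L_H)` of the Heisenberg Lie algebra:
generators `0 ↦ a†`, `1 ↦ a`, `2 ↦ e` with `a·a† = a†·a + e`, `e` central. -/
inductive HRel (K : Type) [CommRing K] :
    FreeAlgebra K (Fin 3) → FreeAlgebra K (Fin 3) → Prop
  | a_ad : HRel K (FreeAlgebra.ι K 1 * FreeAlgebra.ι K 0)
      (FreeAlgebra.ι K 0 * FreeAlgebra.ι K 1 + FreeAlgebra.ι K 2)
  | e_ad : HRel K (FreeAlgebra.ι K 2 * FreeAlgebra.ι K 0)
      (FreeAlgebra.ι K 0 * FreeAlgebra.ι K 2)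
  | e_a : HRel K (FreeAlgebra.ι K 2 * FreeAlgebra.ι K 1)
      (FreeAlgebra.ι K 1 * FreeAlgebra.ι K 2)

/-- The enveloping algebra `U(L_H)`. -/
abbrev UH (K : Type) [CommRing K] := RingQuot (HRel K)

/-- The creation generator `a†` of `U(L_H)`. -/
noncomputable def uad (K : Type) [CommRing K] : UH K :=
  RingQuot.mkAlgHom K (HRel K) (FreeAlgebra.ι K 0)

/-- The annihilation generator `a` of `U(L_H)`. -/
noncomputable def ua (K : Type) [CommRing K] : UH K :=
  RingQuot.mkAlgHom K (HRel K) (FreeAlgebra.ι K 1)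

/-- The central generator `e` of `U(L_H)`. -/
noncomputable def ue (K : Type) [CommRing K] : UH K :=
  RingQuot.mkAlgHom K (HRel K) (FreeAlgebra.ι K 2)


/-- A partially defined directed graph: finitely many edges, each with an optional
head and an optional tail attachment to vertices. -/
structure PGraph where
  V : Type
  E : Type
  [fE : Fintype E]
  [dE : DecidableEq E]
  head : E → Option V
  tail : E → Option V

attribute [instance] PGraph.fE PGraph.dE

namespace PGraph

/-- `Γ` is a Heisenberg-Weyl diagram: every edge has at least one attached endpoint
(totality) and there is no cycle of edges `e₁,…,eₙ` with `head eₖ = tail eₖ₊₁`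
(acyclicity, phrased via the transitive closure of the edge-adjacency relation). -/
def IsHW (Γ : PGraph) : Prop :=
  (∀ e : Γ.E, (Γ.head e).isSome ∨ (Γ.tail e).isSome) ∧
  ∀ e : Γ.E, ¬ Relation.TransGen
      (fun e₁ e₂ => ∃ v, Γ.head e₁ = some v ∧ Γ.tail e₂ = some v) e e

/-- Number of outgoing lines (free head, attached tail). -/
def outCount (Γ : PGraph) : ℕ :=
  (Finset.univ.filter (fun e : Γ.E => (Γ.head e).isNone ∧ (Γ.tail e).isSome)).card

/-- Number of incoming lines (free tail, attached head). -/
def inCount (Γ : PGraph) : ℕ :=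
  (Finset.univ.filter (fun e : Γ.E => (Γ.tail e).isNone ∧ (Γ.head e).isSome)).card

/-- Number of inner lines (both ends attached). -/
def innerCount (Γ : PGraph) : ℕ :=
  (Finset.univ.filter (fun e : Γ.E => (Γ.head e).isSome ∧ (Γ.tail e).isSome)).card

/-- Total number of lines. -/
def edgeCount (Γ : PGraph) : ℕ := Fintype.card Γ.E

/-- A matching between the incoming lines of `Γ₂` and the outgoing lines of `Γ₁`:
a set of pairs with distinct components, each pair consisting of an incoming line
of `Γ₂` and an outgoing line of `Γ₁`. -/
def IsMatching (Γ₂ Γ₁ : PGraph) (m : Finset (Γ₂.E × Γ₁.E)) : Prop :=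
  (∀ p ∈ m, (Γ₂.tail p.1).isNone ∧ (Γ₁.head p.2).isNone) ∧
  (∀ p ∈ m, ∀ q ∈ m, (p.1 = q.1 ∨ p.2 = q.2) → p = q)

/-- The composition `Γ₂ ◁_m Γ₁` of diagrams along a matching `m`: disjoint union of
vertices; unmatched edges kept; each matched pair glued into a single edge whose head
is taken in `Γ₂` and whose tail is taken in `Γ₁`. -/
def glue (Γ₂ Γ₁ : PGraph) (m : Finset (Γ₂.E × Γ₁.E)) : PGraph where
  V := Γ₂.V ⊕ Γ₁.V
  E := {e : Γ₂.E ⊕ Γ₁.E //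
          e ∉ m.image (fun p => Sum.inl p.1) ∧ e ∉ m.image (fun p => Sum.inr p.2)}
        ⊕ {p : Γ₂.E × Γ₁.E // p ∈ m}
  head := fun e =>
    match e with
    | Sum.inl ⟨Sum.inl e₂, _⟩ => (Γ₂.head e₂).map Sum.inl
    | Sum.inl ⟨Sum.inr e₁, _⟩ => (Γ₁.head e₁).map Sum.inr
    | Sum.inr ⟨p, _⟩ => (Γ₂.head p.1).map Sum.inl
  tail := fun e =>
    match e with
    | Sum.inl ⟨Sum.inl e₂, _⟩ => (Γ₂.tail e₂).map Sum.inl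
    | Sum.inl ⟨Sum.inr e₁, _⟩ => (Γ₁.tail e₁).map Sum.inr
    | Sum.inr ⟨p, _⟩ => (Γ₁.tail p.2).map Sum.inr

/-- The subdiagram `Γ|_L` induced by a subset `L` of the edges. -/
def restrict (Γ : PGraph) (L : Finset Γ.E) : PGraph where
  V := Γ.V
  E := {e : Γ.E // e ∈ L}
  head := fun e => Γ.head e.1
  tail := fun e => Γ.tail e.1

end PGraph

instance (Γ₂ Γ₁ : PGraph) (m : Finset (Γ₂.E × Γ₁.E)) :
    Decidable (PGraph.IsMatching Γ₂ Γ₁ m) := by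
  unfold PGraph.IsMatching; infer_instance

/-- The forgetful map `φ` on basis diagrams: `φ(Γ) = (a†)^{|Γ⁺|} a^{|Γ⁻|} e^{|Γ⁰|}`. -/
noncomputable def phiEl (K : Type) [CommRing K] (Γ : PGraph) : UH K :=
  uad K ^ Γ.outCount * ua K ^ Γ.inCount * ue K ^ Γ.innerCount

/-!
`φ` only sees the numbers of outgoing, incoming and inner lines. Gluing along a matching of
size `i` turns `i` incoming lines of `Γ₂` and `i` outgoing lines of `Γ₁` into `i` inner lines,
and there are `C(|Γ₂⁻|, i) · |Γ₁⁺|(|Γ₁⁺| - 1)⋯(|Γ₁⁺| - i + 1)` such matchings (choose the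
matched incoming lines, then inject them into the outgoing ones). On the algebra side,
`a a† = a† a + e` with `e` central gives by induction the normal-ordering formula
`a^q (a†)^k = ∑ᵢ C(q, i) k(k - 1)⋯(k - i + 1) (a†)^(k - i) a^(q - i) e^i`,
which produces the same coefficients in `φ(Γ₂) φ(Γ₁)`.
-/

open Finset

section NormalOrdering

theorem Finset.sum_range_succ_choose_smul {M : Type*} [AddCommMonoid M] (f : ℕ → M) (q : ℕ) :
    ∑ i ∈ range (q + 2), (q + 1).choose i • f i =
      ∑ i ∈ range (q + 1), q.choose i • f i + ∑ i ∈ range (q + 1), q.choose i • f (i + 1) := by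
  rw [sum_range_succ' _ (q + 1)]
  simp only [Nat.choose_succ_succ', add_smul, sum_add_distrib]
  rw [sum_range_succ (fun i => q.choose (i + 1) • f (i + 1)),
    sum_range_succ' (fun i => q.choose i • f i)]
  simp only [Nat.choose_succ_self, Nat.choose_zero_right, zero_smul, add_zero]
  abel

theorem Nat.mul_descFactorial_sub_one (k i : ℕ) :
    k * (k - 1).descFactorial i = k.descFactorial (i + 1) := by
  rcases k with _ | k
  · simp
  · rw [Nat.succ_descFactorial_succ, Nat.add_sub_cancel]

variable {R : Type*} [Semiring R] {x y z : R}

theorem mul_pow_eq_of_mul_eq_add (hyx : y * x = x * y + z) (hzx : Commute z x) :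
    ∀ k : ℕ, y * x ^ k = x ^ k * y + k • (x ^ (k - 1) * z)
  | 0 => by simp
  | k + 1 => by
    rw [pow_succ, ← mul_assoc, mul_pow_eq_of_mul_eq_add hyx hzx k, add_mul, mul_assoc, hyx,
      smul_mul_assoc, mul_assoc, hzx.eq, mul_add, ← mul_assoc, add_assoc, succ_nsmul' _ k]
    rcases k with _ | k
    · simp
    · simp [← mul_assoc, ← pow_succ]

theorem pow_mul_pow_eq_sum_of_mul_eq_add (hyx : y * x = x * y + z) (hzx : Commute z x)
    (hzy : Commute z y) (q k : ℕ) :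
    y ^ q * x ^ k = ∑ i ∈ range (q + 1),
      (q.choose i * k.descFactorial i) • (x ^ (k - i) * y ^ (q - i) * z ^ i) := by
  induction q generalizing k with
  | zero => simp
  | succ q ih =>
    set f : ℕ → R := fun i => k.descFactorial i • (x ^ (k - i) * y ^ (q + 1 - i) * z ^ i)
    have hA : (y ^ q * x ^ k) * y = ∑ i ∈ range (q + 1), q.choose i • f i := by
      rw [ih, sum_mul]
      refine sum_congr rfl fun i hi => ?_
      have hiq : i ≤ q := Nat.lt_succ_iff.1 (mem_range.1 hi)
      rw [smul_mul_assoc, mul_assoc _ (z ^ i), (hzy.pow_left i).eq, ← mul_assoc,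
        mul_assoc _ (y ^ _), ← pow_succ, ← Nat.sub_add_comm hiq, mul_smul]
    have hB : k • ((y ^ q * x ^ (k - 1)) * z) = ∑ i ∈ range (q + 1), q.choose i • f (i + 1) := by
      rw [ih, sum_mul, smul_sum]
      refine sum_congr rfl fun i _ => ?_
      rw [smul_mul_assoc, smul_smul, mul_left_comm, Nat.mul_descFactorial_sub_one, mul_smul]
      simp only [f, mul_assoc, ← pow_succ, Nat.sub_sub, Nat.add_sub_add_right, add_comm 1 i]
    calc y ^ (q + 1) * x ^ k = (y ^ q * x ^ k) * y + k • ((y ^ q * x ^ (k - 1)) * z) := by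
          rw [pow_succ, mul_assoc, mul_pow_eq_of_mul_eq_add hyx hzx, mul_add, mul_smul_comm,
            ← mul_assoc, ← mul_assoc]
      _ = ∑ i ∈ range (q + 2), (q + 1).choose i • f i := by
        rw [hA, hB, sum_range_succ_choose_smul]
      _ = _ := sum_congr rfl fun i _ => (mul_smul _ _ _).symm

theorem mul_mul_eq_sum_of_mul_eq_add (hyx : y * x = x * y + z) (hzx : Commute z x)
    (hzy : Commute z y) (p q r k l n : ℕ) :
    (x ^ p * y ^ q * z ^ r) * (x ^ k * y ^ l * z ^ n) = ∑ i ∈ range (q + 1),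
      (q.choose i * k.descFactorial i) • (x ^ (p + k - i) * y ^ (q + l - i) * z ^ (r + n + i)) := by
  have hr : Commute (z ^ r) (x ^ k * y ^ l) := (hzx.pow_pow r k).mul_right (hzy.pow_pow r l)
  calc (x ^ p * y ^ q * z ^ r) * (x ^ k * y ^ l * z ^ n)
      = x ^ p * (y ^ q * x ^ k) * (y ^ l * z ^ (r + n)) := by
        rw [mul_assoc _ (z ^ r), ← mul_assoc (z ^ r), hr.eq, pow_add]
        simp only [mul_assoc]
    _ = _ := by
      rw [pow_mul_pow_eq_sum_of_mul_eq_add hyx hzx hzy, mul_sum, sum_mul]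
      refine sum_congr rfl fun i hi => ?_
      -- for `i > k` the exponent `p + k - i` is truncated, but the coefficient vanishes
      rcases lt_or_ge k i with hki | hik
      · simp [Nat.descFactorial_eq_zero_iff_lt.2 hki]
      have hiq : i ≤ q := Nat.lt_succ_iff.1 (mem_range.1 hi)
      rw [mul_smul_comm, smul_mul_assoc, Nat.add_sub_assoc hik, Nat.sub_add_comm hiq]
      simp only [mul_assoc]
      rw [← mul_assoc (z ^ i), (hzy.pow_pow i l).eq, mul_assoc, ← pow_add z i, add_comm i]
      simp only [pow_add, mul_assoc]

end NormalOrdering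

section Matchings

variable {α β : Type*} [DecidableEq α] [DecidableEq β]

def matchingsOfCard (A : Finset α) (B : Finset β) (i : ℕ) : Finset (Finset (α × β)) :=
  {m ∈ (A ×ˢ B).powersetCard i | ∀ p ∈ m, ∀ q ∈ m, p.1 = q.1 ∨ p.2 = q.2 → p = q}

variable {A : Finset α} {B : Finset β} {s : Finset α} {i : ℕ} {m : Finset (α × β)}

theorem mem_matchingsOfCard : m ∈ matchingsOfCard A B i ↔
    m ⊆ A ×ˢ B ∧ m.card = i ∧ ∀ p ∈ m, ∀ q ∈ m, p.1 = q.1 ∨ p.2 = q.2 → p = q := by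
  simp [matchingsOfCard, mem_powersetCard, and_assoc]

theorem image_fst_mem_powersetCard (hm : m ∈ matchingsOfCard A B i) :
    m.image Prod.fst ∈ A.powersetCard i := by
  obtain ⟨hAB, rfl, hinj⟩ := mem_matchingsOfCard.1 hm
  refine mem_powersetCard.2 ⟨fun a ha => ?_, card_image_of_injOn fun p hp q hq h =>
    hinj p hp q hq (Or.inl h)⟩
  obtain ⟨p, hp, rfl⟩ := mem_image.1 ha
  exact (mem_product.1 (hAB hp)).1

theorem card_le_of_mem_matchingsOfCard (hm : m ∈ matchingsOfCard A B i) : i ≤ A.card := by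
  obtain ⟨hs, rfl⟩ := mem_powersetCard.1 (image_fst_mem_powersetCard hm)
  exact card_le_card hs

def graphOn (s : Finset α) (f : s → β) : Finset (α × β) := s.attach.image fun a => (a.1, f a)

theorem mem_graphOn {s : Finset α} {f : s → β} {p : α × β} :
    p ∈ graphOn s f ↔ ∃ h : p.1 ∈ s, f ⟨p.1, h⟩ = p.2 := by
  constructor
  · intro hp
    obtain ⟨a, -, rfl⟩ := mem_image.1 hp
    exact ⟨a.2, rfl⟩
  · rintro ⟨h, hf⟩
    exact mem_image.2 ⟨⟨p.1, h⟩, mem_attach _ _, by rw [hf]⟩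

theorem image_fst_graphOn (s : Finset α) (f : s → β) : (graphOn s f).image Prod.fst = s := by
  rw [graphOn, image_image]
  exact attach_image_val

theorem graphOn_injective (s : Finset α) : Function.Injective (graphOn (β := β) s) := by
  intro f g h
  funext a
  have ha : (a.1, f a) ∈ graphOn s g := h ▸ mem_graphOn.2 ⟨a.2, rfl⟩
  exact ((mem_graphOn.1 ha).2).symm

theorem graphOn_mem_matchingsOfCard (hs : s ⊆ A) (f : s ↪ B) :
    graphOn s (fun a => (f a).1) ∈ matchingsOfCard A B s.card := by
  refine mem_matchingsOfCard.2 ⟨fun p hp => ?_, ?_, fun p hp q hq hpq => ?_⟩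
  · obtain ⟨h, hfp⟩ := mem_graphOn.1 hp
    exact mem_product.2 ⟨hs h, hfp ▸ (f _).2⟩
  · rw [graphOn, card_image_of_injective _ fun a b h => Subtype.ext (congrArg Prod.fst h),
      card_attach]
  · obtain ⟨hp, hfp⟩ := mem_graphOn.1 hp
    obtain ⟨hq, hfq⟩ := mem_graphOn.1 hq
    have h1 : p.1 = q.1 := hpq.elim id fun h => by
      simpa using f.injective (Subtype.ext (hfp.trans (h.trans hfq.symm)))
    refine Prod.ext h1 ?_
    rw [← hfp, ← hfq]
    simp_rw [h1]

theorem exists_graphOn_eq (hm : m ∈ matchingsOfCard A B i) :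
    ∃ f : m.image Prod.fst ↪ B, graphOn _ (fun a => (f a).1) = m := by
  obtain ⟨hAB, -, hinj⟩ := mem_matchingsOfCard.1 hm
  have hex (a : m.image Prod.fst) : ∃ b, (a.1, b) ∈ m := by
    obtain ⟨p, hp, hpa⟩ := mem_image.1 a.2
    exact ⟨p.2, hpa ▸ hp⟩
  choose g hg using hex
  refine ⟨⟨fun a => ⟨g a, (mem_product.1 (hAB (hg a))).2⟩, fun a b hab => ?_⟩, ?_⟩
  · exact Subtype.ext (congrArg Prod.fst
      (hinj _ (hg a) _ (hg b) (Or.inr (congrArg Subtype.val hab))))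
  · ext ⟨a, b⟩
    refine ⟨fun hab => ?_, fun hab => ?_⟩
    · obtain ⟨h, hb⟩ := mem_graphOn.1 hab
      rw [← show g ⟨a, h⟩ = b from hb]
      exact hg ⟨a, h⟩
    · have h : a ∈ m.image Prod.fst := mem_image_of_mem Prod.fst hab
      exact mem_graphOn.2 ⟨h, congrArg Prod.snd (hinj _ (hg ⟨a, h⟩) _ hab (Or.inl rfl))⟩

theorem card_filter_image_fst_eq (hs : s ⊆ A) (hsi : s.card = i) :
    #{m ∈ matchingsOfCard A B i | m.image Prod.fst = s} = B.card.descFactorial i := by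
  subst hsi
  have hcard : #(univ : Finset (s ↪ B)) = B.card.descFactorial s.card := by
    simp [Fintype.card_embedding_eq]
  rw [← hcard]
  symm
  refine card_bij (fun f _ => graphOn s fun a => (f a).1) (fun f _ => ?_) (fun f _ g _ h => ?_)
    (fun m hm => ?_)
  · exact mem_filter.2 ⟨graphOn_mem_matchingsOfCard hs f, image_fst_graphOn s _⟩
  · exact DFunLike.ext f g fun a => Subtype.ext (congrFun (graphOn_injective s h) a)
  · obtain ⟨hm, rfl⟩ := mem_filter.1 hm
    obtain ⟨f, hf⟩ := exists_graphOn_eq hm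
    exact ⟨f, mem_univ _, hf⟩

theorem card_matchingsOfCard (A : Finset α) (B : Finset β) (i : ℕ) :
    #(matchingsOfCard A B i) = A.card.choose i * B.card.descFactorial i := by
  rw [card_eq_sum_card_fiberwise (f := fun m => m.image Prod.fst) (t := A.powersetCard i),
    sum_congr rfl fun s hs => card_filter_image_fst_eq (mem_powersetCard.1 hs).1
      (mem_powersetCard.1 hs).2, sum_const, card_powersetCard, smul_eq_mul]
  exact fun m hm => image_fst_mem_powersetCard hm

end Matchings

theorem ua_mul_uad (K : Type) [CommRing K] : ua K * uad K = uad K * ua K + ue K := by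
  simpa [ua, uad, ue] using RingQuot.mkAlgHom_rel K (HRel.a_ad (K := K))

theorem commute_ue_uad (K : Type) [CommRing K] : Commute (ue K) (uad K) := by
  show ue K * uad K = uad K * ue K
  simpa [uad, ue] using RingQuot.mkAlgHom_rel K (HRel.e_ad (K := K))

theorem commute_ue_ua (K : Type) [CommRing K] : Commute (ue K) (ua K) := by
  show ue K * ua K = ua K * ue K
  simpa [ua, ue] using RingQuot.mkAlgHom_rel K (HRel.e_a (K := K))

namespace PGraph

def attached (Γ : PGraph) (e : Γ.E) : Bool × Bool := ((Γ.head e).isSome, (Γ.tail e).isSome)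

-- `lines (false, true)`, `lines (true, false)`, `lines (true, true)`: outgoing, incoming, inner
def lines (Γ : PGraph) (k : Bool × Bool) : Finset Γ.E := {e | Γ.attached e = k}

def IsTotal (Γ : PGraph) : Prop := ∀ e, (Γ.head e).isSome ∨ (Γ.tail e).isSome

theorem IsHW.isTotal {Γ : PGraph} (h : Γ.IsHW) : Γ.IsTotal := h.1

variable {Γ Γ₂ Γ₁ : PGraph} {m : Finset (Γ₂.E × Γ₁.E)}

theorem outCount_eq_card_lines (Γ : PGraph) : Γ.outCount = #(Γ.lines (false, true)) := by
  unfold outCount lines attached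
  congr 1
  ext e
  simp

theorem inCount_eq_card_lines (Γ : PGraph) : Γ.inCount = #(Γ.lines (true, false)) := by
  unfold inCount lines attached
  congr 1
  ext e
  simp [and_comm]

theorem innerCount_eq_card_lines (Γ : PGraph) : Γ.innerCount = #(Γ.lines (true, true)) := by
  unfold innerCount lines attached
  congr 1
  ext e
  simp

theorem card_lines (Γ : PGraph) (k : Bool × Bool) :
    #(Γ.lines k) = ∑ e, if Γ.attached e = k then 1 else 0 :=
  card_filter _ _

theorem IsTotal.attached_eq_true_false_iff (h : Γ.IsTotal) {e : Γ.E} :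
    Γ.attached e = (true, false) ↔ (Γ.tail e).isNone := by
  have := h e
  revert this
  unfold attached
  cases Γ.head e <;> cases Γ.tail e <;> simp

theorem IsTotal.attached_eq_false_true_iff (h : Γ.IsTotal) {e : Γ.E} :
    Γ.attached e = (false, true) ↔ (Γ.head e).isNone := by
  have := h e
  revert this
  unfold attached
  cases Γ.head e <;> cases Γ.tail e <;> simp

theorem IsMatching.injOn_fst (hm : IsMatching Γ₂ Γ₁ m) : Set.InjOn Prod.fst (SetLike.coe m) :=
  fun p hp q hq h => hm.2 p hp q hq (Or.inl h)

theorem IsMatching.injOn_snd (hm : IsMatching Γ₂ Γ₁ m) : Set.InjOn Prod.snd (SetLike.coe m) :=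
  fun p hp q hq h => hm.2 p hp q hq (Or.inr h)

theorem IsMatching.attached_fst (hm : IsMatching Γ₂ Γ₁ m) (h₂ : Γ₂.IsTotal) {p : Γ₂.E × Γ₁.E}
    (hp : p ∈ m) : Γ₂.attached p.1 = (true, false) :=
  h₂.attached_eq_true_false_iff.2 (hm.1 p hp).1

theorem IsMatching.attached_snd (hm : IsMatching Γ₂ Γ₁ m) (h₁ : Γ₁.IsTotal) {p : Γ₂.E × Γ₁.E}
    (hp : p ∈ m) : Γ₁.attached p.2 = (false, true) :=
  h₁.attached_eq_false_true_iff.2 (hm.1 p hp).2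

theorem sum_attached_glue_add {M : Type*} [AddCommMonoid M] (hm : IsMatching Γ₂ Γ₁ m)
    (h₂ : Γ₂.IsTotal) (h₁ : Γ₁.IsTotal) (f : Bool × Bool → M) :
    ∑ e, f ((glue Γ₂ Γ₁ m).attached e) + #m • (f (true, false) + f (false, true)) =
      ∑ e, f (Γ₂.attached e) + ∑ e, f (Γ₁.attached e) + #m • f (true, true) := by
  set F : Γ₂.E ⊕ Γ₁.E → M := Sum.elim (fun e => f (Γ₂.attached e)) (fun e => f (Γ₁.attached e))
  set T : Finset (Γ₂.E ⊕ Γ₁.E) := (m.image Prod.fst).disjSum (m.image Prod.snd)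
  have hmatched : ∑ e ∈ T, F e = #m • (f (true, false) + f (false, true)) := by
    rw [sum_disjSum, sum_image hm.injOn_fst, sum_image hm.injOn_snd, ← sum_add_distrib,
      ← sum_const]
    exact sum_congr rfl fun p hp => by simp [F, hm.attached_fst h₂ hp, hm.attached_snd h₁ hp]
  have hunmatched : ∑ e ∈ univ \ T, F e = ∑ e, f ((glue Γ₂ Γ₁ m).attached (Sum.inl e)) := by
    rw [sum_subtype (univ \ T) (p := fun e => e ∉ m.image (fun p => Sum.inl p.1) ∧
      e ∉ m.image (fun p => Sum.inr p.2)) (fun e => by cases e <;> simp [T])]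
    refine sum_congr rfl fun ⟨e, he⟩ _ => ?_
    cases e <;> simp [F, glue, attached]
  have hglued : #m • f (true, true) = ∑ p, f ((glue Γ₂ Γ₁ m).attached (Sum.inr p)) := by
    have hinner (p : m) : f ((glue Γ₂ Γ₁ m).attached (Sum.inr p)) = f (true, true) := by
      have hfst := hm.attached_fst h₂ p.2
      have hsnd := hm.attached_snd h₁ p.2
      simp only [attached, Prod.mk.injEq] at hfst hsnd
      simp [glue, attached, hfst.1, hsnd.2]
    rw [Fintype.sum_congr _ _ hinner, sum_const, card_univ, Fintype.card_coe]
  have hsplit : ∑ e, f ((glue Γ₂ Γ₁ m).attached e) =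
      ∑ e, f ((glue Γ₂ Γ₁ m).attached (Sum.inl e)) + ∑ p, f ((glue Γ₂ Γ₁ m).attached (Sum.inr p)) :=
    Fintype.sum_sum_type _
  calc _ = ∑ e ∈ univ \ T, F e + #m • f (true, true) + ∑ e ∈ T, F e := by
        rw [hsplit, hunmatched, hglued, hmatched]
    _ = _ := by
      rw [add_right_comm, sum_sdiff (subset_univ T), Fintype.sum_sum_type]
      rfl

theorem glue_outCount_add (hm : IsMatching Γ₂ Γ₁ m) (h₂ : Γ₂.IsTotal) (h₁ : Γ₁.IsTotal) :
    (glue Γ₂ Γ₁ m).outCount + #m = Γ₂.outCount + Γ₁.outCount := by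
  simpa [outCount_eq_card_lines, card_lines] using
    sum_attached_glue_add hm h₂ h₁ fun a => if a = (false, true) then (1 : ℕ) else 0

theorem glue_inCount_add (hm : IsMatching Γ₂ Γ₁ m) (h₂ : Γ₂.IsTotal) (h₁ : Γ₁.IsTotal) :
    (glue Γ₂ Γ₁ m).inCount + #m = Γ₂.inCount + Γ₁.inCount := by
  simpa [inCount_eq_card_lines, card_lines] using
    sum_attached_glue_add hm h₂ h₁ fun a => if a = (true, false) then (1 : ℕ) else 0

theorem glue_innerCount (hm : IsMatching Γ₂ Γ₁ m) (h₂ : Γ₂.IsTotal) (h₁ : Γ₁.IsTotal) :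
    (glue Γ₂ Γ₁ m).innerCount = Γ₂.innerCount + Γ₁.innerCount + #m := by
  simpa [innerCount_eq_card_lines, card_lines] using
    sum_attached_glue_add hm h₂ h₁ fun a => if a = (true, true) then (1 : ℕ) else 0

theorem isMatching_iff_mem_matchingsOfCard (h₂ : Γ₂.IsTotal) (h₁ : Γ₁.IsTotal) :
    IsMatching Γ₂ Γ₁ m ↔
      m ∈ matchingsOfCard (Γ₂.lines (true, false)) (Γ₁.lines (false, true)) #m := by
  simp [IsMatching, mem_matchingsOfCard, subset_iff, lines, h₂.attached_eq_true_false_iff,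
    h₁.attached_eq_false_true_iff]

theorem filter_isMatching_card_eq (h₂ : Γ₂.IsTotal) (h₁ : Γ₁.IsTotal) (i : ℕ) :
    {m ∈ univ.filter (IsMatching Γ₂ Γ₁) | #m = i} =
      matchingsOfCard (Γ₂.lines (true, false)) (Γ₁.lines (false, true)) i := by
  ext m
  simp only [mem_filter, mem_univ, true_and, isMatching_iff_mem_matchingsOfCard h₂ h₁]
  constructor
  · rintro ⟨hm, rfl⟩
    exact hm
  · intro hm
    obtain ⟨-, rfl, -⟩ := mem_matchingsOfCard.1 hm
    exact ⟨hm, rfl⟩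

theorem IsMatching.card_le_inCount (hm : IsMatching Γ₂ Γ₁ m) (h₂ : Γ₂.IsTotal)
    (h₁ : Γ₁.IsTotal) : #m ≤ Γ₂.inCount :=
  inCount_eq_card_lines Γ₂ ▸
    card_le_of_mem_matchingsOfCard ((isMatching_iff_mem_matchingsOfCard h₂ h₁).1 hm)

theorem phiEl_glue (K : Type) [CommRing K] (hm : IsMatching Γ₂ Γ₁ m) (h₂ : Γ₂.IsTotal)
    (h₁ : Γ₁.IsTotal) :
    phiEl K (glue Γ₂ Γ₁ m) = uad K ^ (Γ₂.outCount + Γ₁.outCount - #m) *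
      ua K ^ (Γ₂.inCount + Γ₁.inCount - #m) * ue K ^ (Γ₂.innerCount + Γ₁.innerCount + #m) := by
  rw [phiEl, glue_innerCount hm h₂ h₁, ← glue_outCount_add hm h₂ h₁,
    ← glue_inCount_add hm h₂ h₁, Nat.add_sub_cancel, Nat.add_sub_cancel]

end PGraph

open PGraph in
/-- the linear map `φ : G → U(L_H)`, `φ(Γ) = (a†)^{|Γ⁺|} a^{|Γ⁻|} e^{|Γ⁰|}`,
is multiplicative: on basis diagrams, `φ(Γ₂ * Γ₁) = φ(Γ₂)·φ(Γ₁)`, where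
`Γ₂ * Γ₁ = Σ_m Γ₂ ◁_m Γ₁` is the sum over all matchings `m` between the incoming lines
of `Γ₂` and the outgoing lines of `Γ₁`. -/
theorem phi_multiplicative (K : Type) [Field K]
    (Γ₂ Γ₁ : PGraph) (h₂ : Γ₂.IsHW) (h₁ : Γ₁.IsHW) :
    ∑ m ∈ Finset.univ.filter (fun m : Finset (Γ₂.E × Γ₁.E) => IsMatching Γ₂ Γ₁ m),
        phiEl K (glue Γ₂ Γ₁ m)
      = phiEl K Γ₂ * phiEl K Γ₁ := by
  have ht₂ := h₂.isTotal
  have ht₁ := h₁.isTotal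
  have hmaps : ∀ m ∈ univ.filter (IsMatching Γ₂ Γ₁), #m ∈ range (Γ₂.inCount + 1) :=
    fun m hm => mem_range.2 (Nat.lt_succ_of_le ((mem_filter.1 hm).2.card_le_inCount ht₂ ht₁))
  rw [phiEl, phiEl,
    mul_mul_eq_sum_of_mul_eq_add (ua_mul_uad K) (commute_ue_uad K) (commute_ue_ua K),
    ← sum_fiberwise_of_maps_to hmaps]
  refine sum_congr rfl fun i _ => ?_
  have hterm : ∀ m ∈ {m ∈ univ.filter (IsMatching Γ₂ Γ₁) | #m = i}, phiEl K (glue Γ₂ Γ₁ m) =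
      uad K ^ (Γ₂.outCount + Γ₁.outCount - i) * ua K ^ (Γ₂.inCount + Γ₁.inCount - i) *
        ue K ^ (Γ₂.innerCount + Γ₁.innerCount + i) := fun m hm => by
    rw [phiEl_glue K (mem_filter.1 (mem_filter.1 hm).1).2 ht₂ ht₁, (mem_filter.1 hm).2]
  rw [sum_eq_card_nsmul hterm, filter_isMatching_card_eq ht₂ ht₁, card_matchingsOfCard,
    ← inCount_eq_card_lines, ← outCount_eq_card_lines]
end

section
/- For the coproduct Δ on U(L_H) with primitive generators a†, a, e, the forgetful morphism φ : G → U(L_H), φ(Γ) = (a†)^{|Γ⁺|} a^{|Γ⁻|} e^{|Γ⁰|}, intertwines the diagram coproduct with Δ: (φ⊗φ)(Σ_{L+R=E_Γ} Γ|_L ⊗ Γ|_R) = Δ(φ(Γ)) for every Heisenberg-Weyl diagram Γ. -/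
/-!
Both sides factor over the three kinds of lines. Since `Δ` is multiplicative and `a†`, `a`, `e`
are primitive, `Δ(φ Γ)` is the product of `(x ⊗ 1 + 1 ⊗ x) ^ n` over the three generators `x`,
`n` being the number of lines of the matching kind. On the other side, by totality every line has
exactly one kind, so choosing the left part `L` of a splitting is the same as choosing
independently which outgoing, which incoming and which inner lines go left, and the term of `L`
only sees these three choices. The sum therefore splits into three factors, each of which is the
binomial expansion of `(x ⊗ 1 + 1 ⊗ x) ^ n`, valid because `x ⊗ 1` and `1 ⊗ x` commute.
-/

open Finset TensorProduct

theorem Commute.sum_powerset_pow_mul_pow {α R : Type*} [DecidableEq α] [Semiring R] {x y : R}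
    (h : Commute x y) (s : Finset α) :
    ∑ t ∈ s.powerset, x ^ #t * y ^ #(s \ t) = (x + y) ^ #s := by
  rw [h.add_pow, sum_powerset]
  refine sum_congr rfl fun j _ => ?_
  rw [sum_congr rfl fun t ht => ?_, sum_const, card_powersetCard, nsmul_eq_mul,
    (Nat.cast_commute _ _).eq]
  obtain ⟨hts, rfl⟩ := mem_powersetCard.mp ht
  rw [card_sdiff_of_subset hts]

namespace TensorProduct

variable {α : Type*} [DecidableEq α] (K : Type*) {A : Type*} [CommSemiring K] [Semiring A]
  [Algebra K A]

noncomputable def tmulPowSplit (x : A) (s t : Finset α) : A ⊗[K] A :=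
  (x ^ #t) ⊗ₜ[K] (x ^ #(s \ t))

theorem sum_powerset_tmulPowSplit (x : A) (s : Finset α) :
    ∑ t ∈ s.powerset, tmulPowSplit K x s t = (x ⊗ₜ[K] 1 + 1 ⊗ₜ[K] x) ^ #s := by
  rw [← ((Commute.one_right x).tmul (Commute.one_left x)).sum_powerset_pow_mul_pow]
  simp only [Algebra.TensorProduct.tmul_pow, one_pow, Algebra.TensorProduct.tmul_mul_tmul,
    mul_one, one_mul, tmulPowSplit]

end TensorProduct

theorem Finset.sum_powerset_union_mul {α R : Type*} [DecidableEq α] [NonUnitalNonAssocSemiring R]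
    {s t : Finset α} (hst : Disjoint s t) (f g : Finset α → R) :
    ∑ L ∈ (s ∪ t).powerset, f (L ∩ s) * g (L ∩ t) =
      (∑ A ∈ s.powerset, f A) * ∑ B ∈ t.powerset, g B := by
  rw [sum_mul_sum, ← sum_product']
  refine sum_nbij' (fun L => (L ∩ s, L ∩ t)) (fun p => p.1 ∪ p.2) ?_ ?_ ?_ ?_ ?_
  · intro L _
    simp only [mem_product, mem_powerset]
    exact ⟨inter_subset_right, inter_subset_right⟩
  · intro p hp
    simp only [mem_product, mem_powerset] at hp ⊢
    exact union_subset_union hp.1 hp.2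
  · intro L hL
    simp only [mem_powerset] at hL
    rw [← inter_union_distrib_left, inter_eq_left.2 hL]
  · rintro ⟨A, B⟩ hp
    simp only [mem_product, mem_powerset] at hp
    simp only [Prod.mk.injEq]
    grind [disjoint_left]
  · intro L _
    rfl

theorem Finset.sum_powerset_union_union_mul_mul {α R : Type*} [DecidableEq α]
    [NonUnitalNonAssocSemiring R] {s t u : Finset α} (hst : Disjoint s t) (hsu : Disjoint s u)
    (htu : Disjoint t u) (f g h : Finset α → R) :
    ∑ L ∈ (s ∪ t ∪ u).powerset, f (L ∩ s) * g (L ∩ t) * h (L ∩ u) =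
      (∑ A ∈ s.powerset, f A) * (∑ B ∈ t.powerset, g B) * ∑ C ∈ u.powerset, h C := by
  rw [← sum_powerset_union_mul hst, ← sum_powerset_union_mul (disjoint_union_left.2 ⟨hsu, htu⟩)
    (fun L => f (L ∩ s) * g (L ∩ t))]
  simp only [inter_assoc, union_inter_cancel_left, union_inter_cancel_right]

theorem Finset.card_filter_univ_subtype {α : Type*} (s : Finset α) (p : α → Prop)
    [DecidablePred p] : #{e : s | p e.1} = #{e ∈ s | p e} := by
  rw [univ_eq_attach, filter_attach, card_map, card_attach]

namespace PGraph

variable (Γ : PGraph)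

def outLines : Finset Γ.E := {e | (Γ.head e).isNone ∧ (Γ.tail e).isSome}

def inLines : Finset Γ.E := {e | (Γ.tail e).isNone ∧ (Γ.head e).isSome}

def innerLines : Finset Γ.E := {e | (Γ.head e).isSome ∧ (Γ.tail e).isSome}

theorem disjoint_outLines_inLines : Disjoint Γ.outLines Γ.inLines := by
  simp only [outLines, inLines, disjoint_filter]
  intro e _
  cases Γ.head e <;> simp

theorem disjoint_outLines_innerLines : Disjoint Γ.outLines Γ.innerLines := by
  simp only [outLines, innerLines, disjoint_filter]
  intro e _
  cases Γ.head e <;> simp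

theorem disjoint_inLines_innerLines : Disjoint Γ.inLines Γ.innerLines := by
  simp only [inLines, innerLines, disjoint_filter]
  intro e _
  cases Γ.tail e <;> simp

theorem outLines_union_inLines_union_innerLines (hΓ : Γ.IsHW) :
    Γ.outLines ∪ Γ.inLines ∪ Γ.innerLines = univ := by
  ext e
  have htot := hΓ.1 e
  simp only [outLines, inLines, innerLines, mem_union, mem_filter, mem_univ, true_and, iff_true]
  cases h : Γ.head e <;> cases h' : Γ.tail e <;> simp_all

variable (L : Finset Γ.E)

theorem outCount_restrict : (Γ.restrict L).outCount = #(L ∩ Γ.outLines) := by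
  rw [outLines, inter_filter, inter_univ]
  exact card_filter_univ_subtype L fun e => (Γ.head e).isNone ∧ (Γ.tail e).isSome

theorem inCount_restrict : (Γ.restrict L).inCount = #(L ∩ Γ.inLines) := by
  rw [inLines, inter_filter, inter_univ]
  exact card_filter_univ_subtype L fun e => (Γ.tail e).isNone ∧ (Γ.head e).isSome

theorem innerCount_restrict : (Γ.restrict L).innerCount = #(L ∩ Γ.innerLines) := by
  rw [innerLines, inter_filter, inter_univ]
  exact card_filter_univ_subtype L fun e => (Γ.head e).isSome ∧ (Γ.tail e).isSome

end PGraph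

open PGraph in
theorem phiEl_restrict_tmul_phiEl_restrict_compl (K : Type) [CommRing K] (Γ : PGraph)
    (L : Finset Γ.E) :
    phiEl K (Γ.restrict L) ⊗ₜ[K] phiEl K (Γ.restrict Lᶜ) =
      tmulPowSplit K (uad K) Γ.outLines (L ∩ Γ.outLines) *
        tmulPowSplit K (ua K) Γ.inLines (L ∩ Γ.inLines) *
        tmulPowSplit K (ue K) Γ.innerLines (L ∩ Γ.innerLines) := by
  have compl_inter (s : Finset Γ.E) : Lᶜ ∩ s = s \ (L ∩ s) := by
    rw [sdiff_inter_self_right, sdiff_eq_inter_compl, inter_comm]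
  simp only [phiEl, tmulPowSplit, outCount_restrict, inCount_restrict, innerCount_restrict,
    compl_inter, Algebra.TensorProduct.tmul_mul_tmul]

open TensorProduct in
/-- the forgetful morphism `φ(Γ) = (a†)^{|Γ⁺|} a^{|Γ⁻|} e^{|Γ⁰|}`
intertwines the diagram coproduct `Σ_{L+R=E_Γ} Γ|_L ⊗ Γ|_R` with the coproduct `Δ` of
`U(L_H)` (the algebra map primitive on generators):
`(φ⊗φ)(Σ_{L+R=E_Γ} Γ|_L ⊗ Γ|_R) = Δ(φ(Γ))`. -/
theorem phi_intertwines_coproducts (K : Type) [Field K]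
    (Δ : UH K →ₐ[K] (UH K ⊗[K] UH K))
    (had : Δ (uad K) = uad K ⊗ₜ 1 + 1 ⊗ₜ uad K)
    (ha : Δ (ua K) = ua K ⊗ₜ 1 + 1 ⊗ₜ ua K)
    (he : Δ (ue K) = ue K ⊗ₜ 1 + 1 ⊗ₜ ue K)
    (Γ : PGraph) (hΓ : Γ.IsHW) :
    ∑ L : Finset Γ.E, (phiEl K (Γ.restrict L)) ⊗ₜ[K] (phiEl K (Γ.restrict Lᶜ))
      = Δ (phiEl K Γ) := by
  calc ∑ L : Finset Γ.E, phiEl K (Γ.restrict L) ⊗ₜ[K] phiEl K (Γ.restrict Lᶜ)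
      = ∑ L ∈ (Γ.outLines ∪ Γ.inLines ∪ Γ.innerLines).powerset,
          tmulPowSplit K (uad K) Γ.outLines (L ∩ Γ.outLines) *
            tmulPowSplit K (ua K) Γ.inLines (L ∩ Γ.inLines) *
            tmulPowSplit K (ue K) Γ.innerLines (L ∩ Γ.innerLines) := by
        rw [Γ.outLines_union_inLines_union_innerLines hΓ, powerset_univ]
        exact sum_congr rfl fun L _ => phiEl_restrict_tmul_phiEl_restrict_compl K Γ L
    _ = (uad K ⊗ₜ 1 + 1 ⊗ₜ uad K) ^ Γ.outCount * (ua K ⊗ₜ 1 + 1 ⊗ₜ ua K) ^ Γ.inCount *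
          (ue K ⊗ₜ 1 + 1 ⊗ₜ ue K) ^ Γ.innerCount := by
        rw [sum_powerset_union_union_mul_mul Γ.disjoint_outLines_inLines
          Γ.disjoint_outLines_innerLines Γ.disjoint_inLines_innerLines]
        simp only [sum_powerset_tmulPowSplit]
        rfl
    _ = Δ (phiEl K Γ) := by
        rw [phiEl, map_mul, map_mul, map_pow, map_pow, map_pow, had, ha, he]
end
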